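/- Fix δ ∈ [0,1) and a predicted candidate ĉ ∈ C, and let q̂ ∈ Δ(C) be the BoostedSimVeto weight vector for δ and ĉ. Let (V,C,d) be a 0-decisive instance (i.e., every voter is at distance 0 from her top-ranked candidate, capturing the peer selection setting) inducing preference profile σ, and let the prediction error be η = n·d(ĉ,o)/SC(o,d), where o is a candidate minimizing SC(·,d). Then any candidate a in the (p^uni, q̂)-veto core of σ satisfies SC(a,d) ≤ ( 2/(1+δ) + min{ 2δη/(1+δ), 8δ/((1+δ)(1−δ)) } ) · SC(o,d). -/

import Mathlib

open Finset

/-- The top-ranked candidate of voter `v` under profile `σ` (rank 0 is best). -/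
noncomputable def top {V C : Type*} [Fintype C] [Nonempty C]
    (σ : V → (C ≃ Fin (Fintype.card C))) (v : V) : C :=
  (σ v).symm ⟨0, Fintype.card_pos⟩

/-- Plurality score: number of voters ranking `c` first. -/
noncomputable def plu {V C : Type*} [Fintype C] [Nonempty C]
    (σ : V → (C ≃ Fin (Fintype.card C))) (c : C) : ℕ :=
  Nat.card {v : V // top σ v = c}

/-- `a` is in the `(p,q)`-veto core of `σ`: its `(p,q)`-domination graph admits a
    fractional perfect matching. -/
def inVetoCore {V C : Type*} [Fintype V] [Fintype C]
    (σ : V → (C ≃ Fin (Fintype.card C))) (p : V → ℝ) (q : C → ℝ) (a : C) : Prop :=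
  ∃ w : V → C → ℝ,
    (∀ v c, 0 ≤ w v c) ∧
    (∀ v c, w v c ≠ 0 → σ v a ≤ σ v c) ∧
    (∀ v, ∑ c, w v c = p v) ∧
    (∀ c, ∑ v, w v c = q c)

/-- `μ(σ,q) = min_{c : plu(c) > 0} q(c)·n / plu(c)`. -/
noncomputable def mu {V C : Type*} [Fintype V] [Fintype C] [Nonempty C]
    (σ : V → (C ≃ Fin (Fintype.card C))) (q : C → ℝ) : ℝ :=
  sInf {x : ℝ | ∃ c : C, 0 < plu σ c ∧ x = q c * (Fintype.card V : ℝ) / (plu σ c : ℝ)}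

/-- Social cost of candidate `c`. -/
noncomputable def SC {V C X : Type*} [Fintype V] [MetricSpace X]
    (vloc : V → X) (cloc : C → X) (c : C) : ℝ :=
  ∑ v, dist (vloc v) (cloc c)

/-- The metric (given by locations) is aligned with the preference profile `σ`. -/
def aligned {V C X : Type*} [Fintype C] [MetricSpace X]
    (vloc : V → X) (cloc : C → X) (σ : V → (C ≃ Fin (Fintype.card C))) : Prop :=
  ∀ (v : V) (c₁ c₂ : C), σ v c₁ < σ v c₂ → dist (vloc v) (cloc c₁) ≤ dist (vloc v) (cloc c₂)

/-- The uniform voter-weight vector. -/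
noncomputable def puni (V : Type*) [Fintype V] : V → ℝ := fun _ => 1 / (Fintype.card V : ℝ)

/-- The BoostedSimVeto candidate-weight vector for confidence `δ` and prediction `chat`. -/
noncomputable def qhat {V C : Type*} [Fintype V] [Fintype C] [Nonempty C] [DecidableEq C]
    (σ : V → (C ≃ Fin (Fintype.card C))) (δ : ℝ) (chat : C) : C → ℝ :=
  fun c =>
    if c = chat then
      ((1 - δ) / (1 + δ)) * ((plu σ chat : ℝ) + 2 * δ * (Fintype.card V : ℝ) / (1 - δ))
        / (Fintype.card V : ℝ)
    else ((1 - δ) / (1 + δ)) * (plu σ c : ℝ) / (Fintype.card V : ℝ)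


/-- Counting lemma: a plurality-weighted sum over candidates equals a sum over voters
of the value at their top candidate. -/
lemma plu_mul_sum {V C : Type*} [Fintype V] [Fintype C] [Nonempty C] [DecidableEq C]
    (σ : V → (C ≃ Fin (Fintype.card C))) (g : C → ℝ) :
    ∑ c, (plu σ c : ℝ) * g c = ∑ v, g (top σ v) := by
  have h : ∀ c : C, (plu σ c : ℝ) * g c
      = ∑ _v ∈ Finset.univ.filter (fun v : V => top σ v = c), g c := by
    intro c
    rw [Finset.sum_const, nsmul_eq_mul]
    congr 1
    rw [plu, Nat.card_eq_fintype_card, Fintype.card_subtype]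
  simp_rw [h]
  exact Finset.sum_fiberwise' _ _ _

/-- Corollary 4.6 / `cor:error-devisiveness=0`: for `δ ∈ [0,1)`, a
`0`-decisive instance (every voter is at distance `0` from her top candidate — the peer
selection setting), and a predicted candidate `ĉ` with prediction error
`η = n·d(ĉ,o)/SC(o,d)`, any candidate in the `(p^uni, q̂)`-veto core (with `q̂` the
BoostedSimVeto weight vector) satisfies
`SC(a,d) ≤ (2/(1+δ) + min{2δη/(1+δ), 8δ/((1+δ)(1−δ))})·SC(o,d)`. -/
theorem boostedSimVeto_error_bound_peerSelection {V C X : Type*}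
    [Fintype V] [Nonempty V] [Fintype C] [Nonempty C] [DecidableEq C] [MetricSpace X]
    (σ : V → (C ≃ Fin (Fintype.card C)))
    (δ : ℝ) (hδ0 : 0 ≤ δ) (hδ1 : δ < 1)
    (vloc : V → X) (cloc : C → X) (hal : aligned vloc cloc σ)
    (hdec : ∀ v : V, dist (vloc v) (cloc (top σ v)) = 0)
    (chat : C)
    (a : C) (ha : inVetoCore σ (puni V) (qhat σ δ chat) a)
    (o : C) (ho : ∀ c, SC vloc cloc o ≤ SC vloc cloc c)
    (η : ℝ) (hη : η = (Fintype.card V : ℝ) * dist (cloc chat) (cloc o) / SC vloc cloc o) :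
    SC vloc cloc a ≤
      (2 / (1 + δ) +
        min (2 * δ * η / (1 + δ)) (8 * δ / ((1 + δ) * (1 - δ)))) * SC vloc cloc o  := by
  classical
  obtain ⟨w, hw0, hwe, hwp, hwq⟩ := ha
  have hn : (0:ℝ) < (Fintype.card V : ℝ) := by exact_mod_cast Fintype.card_pos
  have h1p : (0:ℝ) < 1 + δ := by linarith
  have h1m : (0:ℝ) < 1 - δ := by linarith
  set S := SC vloc cloc o with hS
  set A := SC vloc cloc a with hA
  have hS0 : 0 ≤ S := Finset.sum_nonneg fun v _ => dist_nonneg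
  have hA0 : 0 ≤ A := Finset.sum_nonneg fun v _ => dist_nonneg
  -- edge inequality
  have hedge : ∀ v c, w v c ≠ 0 → dist (vloc v) (cloc a) ≤ dist (vloc v) (cloc c) := by
    intro v c h
    rcases lt_or_eq_of_le (hwe v c h) with h' | h'
    · exact hal v a c h'
    · rw [(σ v).injective h']
  set X := min (dist (cloc o) (cloc chat)) (dist (cloc o) (cloc a)) with hX
  set e : C → ℝ := fun c => if c = chat then X else dist (cloc o) (cloc c) with he
  -- per-edge distance bound
  have hkey : ∀ v c, w v c * dist (vloc v) (cloc a)
      ≤ w v c * (dist (vloc v) (cloc o) + e c) := by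
    intro v c
    rcases eq_or_ne (w v c) 0 with h | h
    · simp [h]
    refine mul_le_mul_of_nonneg_left ?_ (hw0 v c)
    have hd := hedge v c h
    by_cases hc : c = chat
    · have h1 : dist (vloc v) (cloc a)
          ≤ dist (vloc v) (cloc o) + dist (cloc o) (cloc chat) := by
        calc dist (vloc v) (cloc a) ≤ dist (vloc v) (cloc chat) := by rw [← hc]; exact hd
          _ ≤ dist (vloc v) (cloc o) + dist (cloc o) (cloc chat) := dist_triangle _ _ _
      have h2 : dist (vloc v) (cloc a)
          ≤ dist (vloc v) (cloc o) + dist (cloc o) (cloc a) := dist_triangle _ _ _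
      have heX : e c = X := by simp [he, hc]
      rw [heX, hX]
      rcases le_total (dist (cloc o) (cloc chat)) (dist (cloc o) (cloc a)) with hm | hm
      · rw [min_eq_left hm]; exact h1
      · rw [min_eq_right hm]; exact h2
    · have heX : e c = dist (cloc o) (cloc c) := by simp [he, hc]
      rw [heX]
      exact hd.trans (dist_triangle _ _ _)
  -- sum rewriting
  have hsum1 : A = (Fintype.card V : ℝ) * ∑ v, ∑ c, w v c * dist (vloc v) (cloc a) := by
    rw [hA, SC, Finset.mul_sum]
    refine Finset.sum_congr rfl fun v _ => ?_
    rw [← Finset.sum_mul, hwp v]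
    simp only [puni]
    field_simp
  have hsum2 : ∑ v, ∑ c, w v c * (dist (vloc v) (cloc o) + e c)
      = (∑ v, (1 / (Fintype.card V : ℝ)) * dist (vloc v) (cloc o))
        + ∑ c, qhat σ δ chat c * e c := by
    simp_rw [mul_add, Finset.sum_add_distrib]
    congr 1
    · refine Finset.sum_congr rfl fun v _ => ?_
      rw [← Finset.sum_mul, hwp v]
      simp only [puni]
    · rw [Finset.sum_comm]
      refine Finset.sum_congr rfl fun c _ => ?_
      rw [← Finset.sum_mul, hwq c]
  -- splitting qhat
  have hq : ∀ c, qhat σ δ chat c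
      = ((1 - δ) / (1 + δ)) * (plu σ c : ℝ) / (Fintype.card V : ℝ)
        + (if c = chat then 2 * δ / (1 + δ) else 0) := by
    intro c
    by_cases hc : c = chat
    · subst hc
      simp only [qhat, if_pos rfl, eq_self_iff_true, if_true]
      field_simp
    · simp [qhat, hc]
  -- bounding the q-weighted sum
  have hplu : ∑ c, (plu σ c : ℝ) * e c ≤ S := by
    have hle : ∀ c, (plu σ c : ℝ) * e c ≤ (plu σ c : ℝ) * dist (cloc o) (cloc c) := by
      intro c
      refine mul_le_mul_of_nonneg_left ?_ (Nat.cast_nonneg _)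
      by_cases hc : c = chat
      · subst hc
        simp only [he, if_pos rfl, hX]
        exact min_le_left _ _
      · simp [he, hc]
    calc ∑ c, (plu σ c : ℝ) * e c ≤ ∑ c, (plu σ c : ℝ) * dist (cloc o) (cloc c) :=
          Finset.sum_le_sum fun c _ => hle c
      _ = ∑ v, dist (cloc o) (cloc (top σ v)) := plu_mul_sum σ _
      _ ≤ ∑ v, dist (vloc v) (cloc o) := by
          refine Finset.sum_le_sum fun v _ => ?_
          calc dist (cloc o) (cloc (top σ v))
              ≤ dist (cloc o) (vloc v) + dist (vloc v) (cloc (top σ v)) := dist_triangle _ _ _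
            _ = dist (vloc v) (cloc o) := by rw [hdec v, dist_comm, add_zero]
      _ = S := rfl
  have hqsum : ∑ c, qhat σ δ chat c * e c
      ≤ ((1 - δ) / (1 + δ)) * (1 / (Fintype.card V : ℝ)) * S + (2 * δ / (1 + δ)) * X := by
    have h2 : ∑ c, (if c = chat then 2 * δ / (1 + δ) else 0) * e c
        = (2 * δ / (1 + δ)) * X := by
      simp_rw [ite_mul, zero_mul]
      rw [Finset.sum_ite_eq' Finset.univ chat (fun c => 2 * δ / (1 + δ) * e c)]
      simp [he]
    have h1 : ∑ c, (((1 - δ) / (1 + δ)) * (plu σ c : ℝ) / (Fintype.card V : ℝ)) * e c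
        ≤ ((1 - δ) / (1 + δ)) * (1 / (Fintype.card V : ℝ)) * S := by
      have heq : ∑ c, (((1 - δ) / (1 + δ)) * (plu σ c : ℝ) / (Fintype.card V : ℝ)) * e c
          = ((1 - δ) / (1 + δ)) * (1 / (Fintype.card V : ℝ))
            * ∑ c, (plu σ c : ℝ) * e c := by
        rw [Finset.mul_sum]
        refine Finset.sum_congr rfl fun c _ => ?_
        ring
      rw [heq]
      refine mul_le_mul_of_nonneg_left hplu ?_
      positivity
    calc ∑ c, qhat σ δ chat c * e c
        = ∑ c, ((((1 - δ) / (1 + δ)) * (plu σ c : ℝ) / (Fintype.card V : ℝ)) * e c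
            + (if c = chat then 2 * δ / (1 + δ) else 0) * e c) := by
          refine Finset.sum_congr rfl fun c _ => ?_
          rw [hq c, add_mul]
      _ = (∑ c, (((1 - δ) / (1 + δ)) * (plu σ c : ℝ) / (Fintype.card V : ℝ)) * e c)
            + ∑ c, (if c = chat then 2 * δ / (1 + δ) else 0) * e c :=
          Finset.sum_add_distrib
      _ ≤ _ := by rw [h2]; exact add_le_add_left h1 _
  -- the master inequality
  have hmaster : (1 + δ) * A ≤ 2 * S + 2 * δ * (Fintype.card V : ℝ) * X := by
    have hsv : ∑ v, (1 / (Fintype.card V : ℝ)) * dist (vloc v) (cloc o)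
        = (1 / (Fintype.card V : ℝ)) * S := by
      rw [hS, SC, Finset.mul_sum]
    have hm : A ≤ (Fintype.card V : ℝ) *
        ((1 / (Fintype.card V : ℝ)) * S
          + (((1 - δ) / (1 + δ)) * (1 / (Fintype.card V : ℝ)) * S + (2 * δ / (1 + δ)) * X)) := by
      calc A = (Fintype.card V : ℝ) * ∑ v, ∑ c, w v c * dist (vloc v) (cloc a) := hsum1
        _ ≤ (Fintype.card V : ℝ) * ∑ v, ∑ c, w v c * (dist (vloc v) (cloc o) + e c) := by
            refine mul_le_mul_of_nonneg_left ?_ hn.le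
            exact Finset.sum_le_sum fun v _ => Finset.sum_le_sum fun c _ => hkey v c
        _ = (Fintype.card V : ℝ) *
            ((∑ v, (1 / (Fintype.card V : ℝ)) * dist (vloc v) (cloc o))
              + ∑ c, qhat σ δ chat c * e c) := by rw [hsum2]
        _ ≤ _ := by
            refine mul_le_mul_of_nonneg_left ?_ hn.le
            rw [hsv]
            exact add_le_add_right hqsum _
    have hexp : (Fintype.card V : ℝ) *
        ((1 / (Fintype.card V : ℝ)) * S
          + (((1 - δ) / (1 + δ)) * (1 / (Fintype.card V : ℝ)) * S + (2 * δ / (1 + δ)) * X))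
        = (2 * S + 2 * δ * (Fintype.card V : ℝ) * X) / (1 + δ) := by
      field_simp
      ring
    rw [hexp] at hm
    rw [le_div_iff₀ h1p] at hm
    linarith [hm]
  -- Branch B : robustness bound
  have hXa : X ≤ dist (cloc o) (cloc a) := min_le_right _ _
  have hda : (Fintype.card V : ℝ) * dist (cloc o) (cloc a) ≤ S + A := by
    have hv : ∀ v : V, dist (cloc o) (cloc a)
        ≤ dist (vloc v) (cloc o) + dist (vloc v) (cloc a) := by
      intro v
      calc dist (cloc o) (cloc a) ≤ dist (cloc o) (vloc v) + dist (vloc v) (cloc a) :=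
            dist_triangle _ _ _
        _ = dist (vloc v) (cloc o) + dist (vloc v) (cloc a) := by rw [dist_comm (cloc o)]
    calc (Fintype.card V : ℝ) * dist (cloc o) (cloc a)
        = ∑ _v : V, dist (cloc o) (cloc a) := by
          rw [Finset.sum_const, nsmul_eq_mul, Finset.card_univ]
      _ ≤ ∑ v, (dist (vloc v) (cloc o) + dist (vloc v) (cloc a)) :=
          Finset.sum_le_sum fun v _ => hv v
      _ = S + A := Finset.sum_add_distrib
  have hB : A * (1 - δ) ≤ 2 * (1 + δ) * S := by
    have h1 : 2 * δ * ((Fintype.card V : ℝ) * X) ≤ 2 * δ * (S + A) := by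
      refine mul_le_mul_of_nonneg_left ?_ (by positivity)
      calc (Fintype.card V : ℝ) * X ≤ (Fintype.card V : ℝ) * dist (cloc o) (cloc a) :=
            mul_le_mul_of_nonneg_left hXa hn.le
        _ ≤ S + A := hda
    nlinarith [hmaster, h1]
  -- Branch B final form
  have hgoalB : A ≤ (2 / (1 + δ) + 8 * δ / ((1 + δ) * (1 - δ))) * S := by
    have hprod : (0:ℝ) < (1 + δ) * (1 - δ) := by positivity
    have key : A * ((1 + δ) * (1 - δ)) ≤ (2 * (1 - δ) + 8 * δ) * S := by
      nlinarith [mul_le_mul_of_nonneg_left hB h1p.le,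
        mul_nonneg (mul_nonneg hδ0 (by linarith : (0:ℝ) ≤ 1 - δ)) hS0]
    have hrhs : (2 / (1 + δ) + 8 * δ / ((1 + δ) * (1 - δ))) * S
        = ((2 * (1 - δ) + 8 * δ) * S) / ((1 + δ) * (1 - δ)) := by
      field_simp
    rw [hrhs, le_div_iff₀ hprod]
    exact key
  -- Branch A : consistency bound
  have hgoalA : A ≤ (2 / (1 + δ) + 2 * δ * η / (1 + δ)) * S := by
    by_cases hSz : S = 0
    · have hA0' : A ≤ 0 := by
        have := hB
        rw [hSz] at this
        nlinarith [this]
      rw [hSz, mul_zero]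
      exact hA0'
    · have hηS : η * S = (Fintype.card V : ℝ) * dist (cloc o) (cloc chat) := by
        rw [hη, div_mul_cancel₀ _ hSz, dist_comm]
      have h1 : (1 + δ) * A ≤ 2 * S + 2 * δ * (η * S) := by
        have h2 : 2 * δ * ((Fintype.card V : ℝ) * X)
            ≤ 2 * δ * ((Fintype.card V : ℝ) * dist (cloc o) (cloc chat)) := by
          refine mul_le_mul_of_nonneg_left ?_ (by positivity)
          exact mul_le_mul_of_nonneg_left (min_le_left _ _) hn.le
        rw [← hηS] at h2
        linarith [hmaster]
      have hrhs : (2 / (1 + δ) + 2 * δ * η / (1 + δ)) * S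
          = (2 * S + 2 * δ * (η * S)) / (1 + δ) := by
        field_simp
      rw [hrhs, le_div_iff₀ h1p]
      linarith [h1]
  -- combine
  rcases le_total (2 * δ * η / (1 + δ)) (8 * δ / ((1 + δ) * (1 - δ))) with hm | hm
  · rw [min_eq_left hm]
    exact hgoalA
  · rw [min_eq_right hm]
    exact hgoalB
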